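/- Let E ∈ g_0 be the grading element. Then for every A ∈ g_0, κ(E, A) = 2 · Σ_{i=1}^{k} i · tr(ad(A)|_{g_i}). (This is the Lie-algebra identity underlying the fact that the homomorphism λ(g) = Π_α |det(Ad^α(g))|^{2a_α} defining the canonical bundle of scales has derivative λ'(A) = B(E_λ, A).) -/

import Mathlib

/-! Since `ad E` acts on `g i` as the scalar `i` and `ad A` preserves every `g i`,
`κ(E, A) = tr(ad E ∘ ad A) = ∑ i, i * tr(ad A | g i)`. The Killing form pairs `g i` perfectly
with `g (-i)` and `ad A` is skew for it, so `tr(ad A | g (-i)) = -tr(ad A | g i)`: the summand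
is even in `i`, and the sum over `-k ≤ i ≤ k` folds into twice the sum over `1 ≤ i ≤ k`. -/

open Module Set

theorem LinearMap.trace_eq_of_isPerfPair {R M N : Type*} [CommRing R]
    [AddCommGroup M] [Module R M] [Module.Free R M] [Module.Finite R M]
    [AddCommGroup N] [Module R N] [Module.Free R N] [Module.Finite R N]
    (p : M →ₗ[R] N →ₗ[R] R) [p.IsPerfPair] {f : Module.End R M} {g : Module.End R N}
    (h : ∀ x y, p (f x) y = p x (g y)) :
    trace R N g = trace R M f := by
  have : p.toPerfPair.conj f = Dual.transpose g := by
    ext φ y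
    obtain ⟨x, rfl⟩ := p.toPerfPair.surjective φ
    simp [LinearEquiv.conj_apply, Dual.transpose_apply, h]
  rw [← trace_transpose', ← this, trace_conj']

theorem LinearMap.trace_eq_sum_trace_restrict_of_forall_notMem {ι R M : Type*} [CommRing R]
    [AddCommGroup M] [Module R M] {N : ι → Submodule R M} [DecidableEq ι]
    [∀ i, Module.Finite R (N i)] [∀ i, Module.Free R (N i)]
    (h : DirectSum.IsInternal N) (s : Finset ι) (hs : ∀ i ∉ s, N i = ⊥)
    {f : Module.End R M} (hf : ∀ i, MapsTo f (N i) (N i)) :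
    trace R M f = ∑ i ∈ s, trace R (N i) (f.restrict (hf i)) := by
  have hN : {i | N i ≠ ⊥}.Finite :=
    s.finite_toSet.subset fun i hi ↦ by_contra fun hi' ↦ hi (hs i hi')
  rw [trace_eq_sum_trace_restrict' h hN hf]
  refine Finset.sum_subset (fun i hi ↦ by_contra fun hi' ↦ (hN.mem_toFinset.mp hi) (hs i hi'))
    fun i _ hi ↦ ?_
  have : Subsingleton (N i) := by
    rw [hN.mem_toFinset, mem_ofPred_eq, not_not] at hi
    rw [hi]; infer_instance
  rw [Subsingleton.elim (f.restrict (hf i)) 0, map_zero]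

theorem Finset.sum_Icc_neg_eq_add_two_nsmul {M : Type*} [AddCommGroup M] {f : ℤ → M}
    (hf : f.Even) (N : ℕ) :
    ∑ m ∈ Icc (-N : ℤ) N, f m = f 0 + 2 • ∑ m ∈ Icc (1 : ℤ) N, f m := by
  induction N with
  | zero => simp
  | succ N ih =>
    have hIcc : Icc (1 : ℤ) (N + 1) = insert ((N : ℤ) + 1) (Icc (1 : ℤ) N) := by
      ext; simp only [mem_Icc, mem_insert]; omega
    push_cast
    rw [sum_Icc_succ_eq_add_endpoints, ih, hf, hIcc, sum_insert (by simp)]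
    abel

section GradedLieAlgebra

variable {K L : Type*} [Field K] [LieRing L] [LieAlgebra K L] [Module.Finite K L]
  {g : ℤ → Submodule K L}

theorem killingForm_eq_zero_of_mem_of_add_ne_zero (hint : DirectSum.IsInternal g)
    (hbr : ∀ i j : ℤ, ∀ x ∈ g i, ∀ y ∈ g j, ⁅x, y⁆ ∈ g (i + j))
    {i j : ℤ} (hij : i + j ≠ 0) {x y : L} (hx : x ∈ g i) (hy : y ∈ g j) :
    killingForm K L x y = 0 := by
  rw [killingForm_apply_apply]
  refine LinearMap.trace_eq_zero_of_mapsTo_ne hint (· + (i + j)) (by omega) fun m z hz ↦ ?_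
  simpa [add_comm m, add_assoc] using hbr _ _ x hx _ (hbr _ _ y hy z hz)

theorem eq_zero_of_killingForm_eq_zero_of_add_eq_zero (hκ : (killingForm K L).Nondegenerate)
    (hint : DirectSum.IsInternal g)
    (hbr : ∀ i j : ℤ, ∀ x ∈ g i, ∀ y ∈ g j, ⁅x, y⁆ ∈ g (i + j))
    {i j : ℤ} (hij : i + j = 0) {x : L} (hx : x ∈ g i) (h : ∀ y ∈ g j, killingForm K L x y = 0) :
    x = 0 := by
  refine hκ.1 x fun z ↦ ?_
  have hz : z ∈ ⨆ l, g l := hint.submodule_iSup_eq_top ▸ Submodule.mem_top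
  induction hz using Submodule.iSup_induction' with
  | mem l y hy =>
    obtain rfl | hl := eq_or_ne l j
    · exact h y hy
    · exact killingForm_eq_zero_of_mem_of_add_ne_zero hint hbr (by omega) hx hy
  | zero => simp
  | add y y' _ _ hy hy' => simp [hy, hy']

theorem isPerfPair_killingForm_compl₁₂_subtype (hκ : (killingForm K L).Nondegenerate)
    (hint : DirectSum.IsInternal g)
    (hbr : ∀ i j : ℤ, ∀ x ∈ g i, ∀ y ∈ g j, ⁅x, y⁆ ∈ g (i + j))
    {i j : ℤ} (hij : i + j = 0) :
    ((killingForm K L).compl₁₂ (g i).subtype (g j).subtype).IsPerfPair := by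
  refine .of_injective (injective_iff_map_eq_zero _ |>.mpr fun x hx ↦ ?_)
    (injective_iff_map_eq_zero _ |>.mpr fun y hy ↦ ?_)
  · refine Subtype.ext <| eq_zero_of_killingForm_eq_zero_of_add_eq_zero hκ hint hbr hij x.2
      fun y hy' ↦ ?_
    simpa using LinearMap.congr_fun hx ⟨y, hy'⟩
  · refine Subtype.ext <| eq_zero_of_killingForm_eq_zero_of_add_eq_zero hκ hint hbr
      (j := i) (by omega) y.2 fun x hx' ↦ ?_
    simpa [LieModule.traceForm_comm K L L y] using LinearMap.congr_fun hy ⟨x, hx'⟩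

theorem trace_eq_neg_trace_of_add_eq_zero (hκ : (killingForm K L).Nondegenerate)
    (hint : DirectSum.IsInternal g)
    (hbr : ∀ i j : ℤ, ∀ x ∈ g i, ∀ y ∈ g j, ⁅x, y⁆ ∈ g (i + j))
    {i j : ℤ} (hij : i + j = 0) {A : L} {f : Module.End K (g i)} {f' : Module.End K (g j)}
    (hf : ∀ x, (f x : L) = ⁅A, (x : L)⁆) (hf' : ∀ y, (f' y : L) = ⁅A, (y : L)⁆) :
    LinearMap.trace K (g j) f' = -LinearMap.trace K (g i) f := by
  have := isPerfPair_killingForm_compl₁₂_subtype hκ hint hbr hij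
  rw [← LinearMap.trace_eq_of_isPerfPair ((killingForm K L).compl₁₂ (g i).subtype (g j).subtype)
    (f := f) (g := -f') fun x y ↦ ?_, map_neg, neg_neg]
  simp only [LinearMap.compl₁₂_apply, Submodule.subtype_apply, LinearMap.neg_apply,
    hf, hf', map_neg]
  exact LieModule.traceForm_apply_lie_apply' K L L A x y

theorem killingForm_grading_element_eq_sum_mul_trace (hint : DirectSum.IsInternal g)
    {E A : L} (hE : ∀ (i : ℤ) (X : L), X ∈ g i → ⁅E, X⁆ = i • X)
    (f : ∀ i, Module.End K (g i)) (hf : ∀ i x, (f i x : L) = ⁅A, (x : L)⁆)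
    (s : Finset ℤ) (hs : ∀ i ∉ s, g i = ⊥) :
    killingForm K L E A = ∑ i ∈ s, (i : K) * LinearMap.trace K (g i) (f i) := by
  have hA : ∀ i, ∀ x ∈ g i, ⁅A, x⁆ ∈ g i := fun i x hx ↦ hf i ⟨x, hx⟩ ▸ (f i ⟨x, hx⟩).2
  have hEA : ∀ i, ∀ x ∈ g i, ⁅E, ⁅A, x⁆⁆ = (i : K) • ⁅A, x⁆ := fun i x hx ↦ by
    rw [hE i _ (hA i x hx), Int.cast_smul_eq_zsmul]
  set T := LieAlgebra.ad K L E ∘ₗ LieAlgebra.ad K L A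
  have hmaps : ∀ i, MapsTo T (g i) (g i) :=
    fun i x hx ↦ by simpa [T, hEA i x hx] using (g i).smul_mem (i : K) (hA i x hx)
  have hres : ∀ i, T.restrict (hmaps i) = (i : K) • f i := fun i ↦ by
    ext x
    rw [LinearMap.smul_apply, Submodule.coe_smul, hf]
    exact hEA i x x.2
  rw [killingForm_apply_apply,
    LinearMap.trace_eq_sum_trace_restrict_of_forall_notMem hint s hs hmaps]
  simp [hres]

end GradedLieAlgebra

theorem killingForm_grading_element_eq_two_mul_sum_traces_general
    {𝕂 : Type*} [Field 𝕂]
    {L : Type*} [LieRing L] [LieAlgebra 𝕂 L] [Module.Finite 𝕂 L]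
    (hκ : (killingForm 𝕂 L).Nondegenerate)
    (k : ℕ)
    (g : ℤ → Submodule 𝕂 L)
    (hbd : ∀ i : ℤ, (k : ℤ) < |i| → g i = ⊥)
    (hint : DirectSum.IsInternal g)
    (hbr : ∀ i j : ℤ, ∀ x ∈ g i, ∀ y ∈ g j, ⁅x, y⁆ ∈ g (i + j))
    (E : L)
    (hE : ∀ (i : ℤ) (X : L), X ∈ g i → ⁅E, X⁆ = i • X)
    (A : L)
    (f : ∀ i : ℤ, g i →ₗ[𝕂] g i)
    (hf : ∀ (i : ℤ) (x : g i), (f i x : L) = ⁅A, (x : L)⁆) :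
    killingForm 𝕂 L E A =
      2 * ∑ i ∈ Finset.Icc (1 : ℤ) (k : ℤ), (i : 𝕂) * LinearMap.trace 𝕂 (g i) (f i) := by
  have hs : ∀ i ∉ Finset.Icc (-k : ℤ) k, g i = ⊥ := fun i hi ↦
    hbd i (by rw [Finset.mem_Icc] at hi; cases abs_cases i <;> omega)
  have heven : Function.Even fun i : ℤ ↦ (i : 𝕂) * LinearMap.trace 𝕂 (g i) (f i) := fun i ↦ by
    dsimp only
    rw [trace_eq_neg_trace_of_add_eq_zero hκ hint hbr (add_neg_cancel i) (hf i) (hf (-i))]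
    push_cast; ring
  rw [killingForm_grading_element_eq_sum_mul_trace hint hE f hf _ hs,
    Finset.sum_Icc_neg_eq_add_two_nsmul heven]
  simp

/-- For the grading element `E` and any `A ∈ g 0`,
`κ(E, A) = 2 * ∑_{i = 1}^{k} i * tr(ad A | g i)`. -/
theorem killingForm_grading_element_eq_two_mul_sum_traces
    {𝕂 : Type*} [Field 𝕂] [CharZero 𝕂]
    {L : Type*} [LieRing L] [LieAlgebra 𝕂 L] [Module.Finite 𝕂 L]
    (hκ : (killingForm 𝕂 L).Nondegenerate)
    (k : ℕ) (hk : 1 ≤ k)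
    (g : ℤ → Submodule 𝕂 L)
    (hbd : ∀ i : ℤ, (k : ℤ) < |i| → g i = ⊥)
    (hint : DirectSum.IsInternal g)
    (hbr : ∀ i j : ℤ, ∀ x ∈ g i, ∀ y ∈ g j, ⁅x, y⁆ ∈ g (i + j))
    (E : L) (hE0 : E ∈ g 0)
    (hE : ∀ (i : ℤ) (X : L), X ∈ g i → ⁅E, X⁆ = i • X)
    (A : L) (hA : A ∈ g 0)
    (f : ∀ i : ℤ, g i →ₗ[𝕂] g i)
    (hf : ∀ (i : ℤ) (x : g i), (f i x : L) = ⁅A, (x : L)⁆) :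
    killingForm 𝕂 L E A =
      2 * ∑ i ∈ Finset.Icc (1 : ℤ) (k : ℤ), (i : 𝕂) * LinearMap.trace 𝕂 (g i) (f i) :=
  killingForm_grading_element_eq_two_mul_sum_traces_general hκ k g hbd hint hbr E hE A f hf
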